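/- arXiv:1202.6023 — 2 statements merged into one kernel-verified Lean document; each statement's English description precedes it below -/
import Mathlib

section
/- Let Λ ⊆ ℝ^N be a non-periodic Delone set. If Λ is linearly repetitive (LR), then Λ satisfies uniformity of return words (U), i.e. sup{λ(L_P) : P a ball pattern on Λ} < ∞, where λ(L_P) is the supremum of the distortions of the Voronoi cells of the locater set L_P. -/
open Filter MeasureTheory Bornology
open scoped ENNReal

noncomputable section

/-- Euclidean space `ℝ^N`. -/
abbrev Euc (N : ℕ) := EuclideanSpace ℝ (Fin N)

/-- The packing radius of a set: half of the infimum of distances between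
distinct points (`⊤` if no such pair exists). -/
def rPack {N : ℕ} (Λ : Set (Euc N)) : ℝ≥0∞ :=
  ⨅ (x ∈ Λ) (y ∈ Λ) (_ : x ≠ y), edist x y / 2

/-- The covering radius of a set: the supremum over all points of the space of
the distance to the set. -/
def rCov {N : ℕ} (Λ : Set (Euc N)) : ℝ≥0∞ :=
  ⨆ p : Euc N, EMetric.infEdist p Λ

/-- A set is uniformly discrete if its packing radius is positive. -/
def UniformlyDiscrete {N : ℕ} (Λ : Set (Euc N)) : Prop := 0 < rPack Λ

/-- A set is relatively dense if its covering radius is finite. -/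
def RelativelyDense {N : ℕ} (Λ : Set (Euc N)) : Prop := rCov Λ < ⊤

/-- A Delone set is a uniformly discrete and relatively dense set. -/
def IsDelone {N : ℕ} (Λ : Set (Euc N)) : Prop :=
  UniformlyDiscrete Λ ∧ RelativelyDense Λ

/-- Λ is non-periodic if no nonzero translate of Λ equals Λ. -/
def NonPeriodic {N : ℕ} (Λ : Set (Euc N)) : Prop :=
  ∀ t : Euc N, t ≠ 0 → (fun p => p - t) '' Λ ≠ Λ

/-- The patch of the ball pattern `(x, R)`: `(Λ - x) ∩ B_R`. -/
def patch {N : ℕ} (Λ : Set (Euc N)) (x : Euc N) (R : ℝ) : Set (Euc N) :=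
  ((fun y => y - x) '' Λ) ∩ Metric.closedBall 0 R

/-- The locater set of the ball pattern `(x, R)`: the set of points of Λ whose
`R`-patch agrees with that of `x`. -/
def locSet {N : ℕ} (Λ : Set (Euc N)) (x : Euc N) (R : ℝ) : Set (Euc N) :=
  {y ∈ Λ | patch Λ y R = patch Λ x R}

/-- Λ is repetitive if the locater set of every ball pattern is relatively dense. -/
def Repetitive {N : ℕ} (Λ : Set (Euc N)) : Prop :=
  ∀ x ∈ Λ, ∀ R : ℝ, 0 < R → RelativelyDense (locSet Λ x R)

/-- `L_P(Q)`: the points of the locater set of `(x,R)` whose `R`-ball lies inside `Q`. -/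
def locIn {N : ℕ} (Λ : Set (Euc N)) (x : Euc N) (R : ℝ) (Q : Set (Euc N)) :
    Set (Euc N) :=
  {y ∈ locSet Λ x R | Metric.closedBall y R ⊆ Q}

/-- `♯_P Q`: the number of copies of the ball pattern `P = (x,R)` in `Q`. -/
def countP {N : ℕ} (Λ : Set (Euc N)) (x : Euc N) (R : ℝ) (Q : Set (Euc N)) : ℕ :=
  (locIn Λ x R Q).ncard

/-- `♯'_P Q`: the maximal number of completely disjoint copies of `P = (x,R)` in `Q`. -/
def countP' {N : ℕ} (Λ : Set (Euc N)) (x : Euc N) (R : ℝ) (Q : Set (Euc N)) : ℕ :=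
  sSup {n : ℕ | ∃ A : Finset (Euc N), ↑A ⊆ locIn Λ x R Q ∧
    (∀ u ∈ A, ∀ v ∈ A, u ≠ v → 2 * R < dist u v) ∧ A.card = n}

/-- The cube with corner `a` and sidelength `s`. -/
def cube {N : ℕ} (a : Euc N) (s : ℝ) : Set (Euc N) :=
  {p | ∀ i, a i ≤ p i ∧ p i ≤ a i + s}

/-- The filter describing cubes `C` with `|C| → ∞`: arbitrary corner, sidelength
tending to infinity. -/
def cubeFilter (N : ℕ) : Filter (Euc N × ℝ) := (⊤ : Filter (Euc N)) ×ˢ atTop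

/-- The Lebesgue measure `|B_R|` of a closed ball of radius `R` in `ℝ^N`. -/
def ballVol (N : ℕ) (R : ℝ) : ℝ := (volume (Metric.closedBall (0 : Euc N) R)).toReal

/-- The lower density `ν(P)` of the ball pattern `P = (x,R)`:
`liminf_{|C|→∞} ♯_P C · |B_R| / |C|` over cubes `C`. -/
def nu {N : ℕ} (Λ : Set (Euc N)) (x : Euc N) (R : ℝ) : ℝ :=
  liminf (fun cs : Euc N × ℝ =>
    (countP Λ x R (cube cs.1 cs.2) : ℝ) * ballVol N R / cs.2 ^ N) (cubeFilter N)

/-- The lower reduced density `ν'(P)` of the ball pattern `P = (x,R)`: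
`liminf_{|C|→∞} ♯'_P C · |B_R| / |C|` over cubes `C`. -/
def nu' {N : ℕ} (Λ : Set (Euc N)) (x : Euc N) (R : ℝ) : ℝ :=
  liminf (fun cs : Euc N × ℝ =>
    (countP' Λ x R (cube cs.1 cs.2) : ℝ) * ballVol N R / cs.2 ^ N) (cubeFilter N)

/-- `w = inf {ν(P) : r(P) ≥ 1}`. -/
def wPW {N : ℕ} (Λ : Set (Euc N)) : ℝ :=
  sInf {v | ∃ x ∈ Λ, ∃ R : ℝ, 1 ≤ R ∧ v = nu Λ x R}

/-- `w' = inf {ν'(P) : r(P) ≥ 1}`. -/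
def wPQ {N : ℕ} (Λ : Set (Euc N)) : ℝ :=
  sInf {v | ∃ x ∈ Λ, ∃ R : ℝ, 1 ≤ R ∧ v = nu' Λ x R}

/-- Positivity of weights (PW). -/
def PW {N : ℕ} (Λ : Set (Euc N)) : Prop := 0 < wPW Λ

/-- Positivity of quasiweights (PQ). -/
def PQ {N : ℕ} (Λ : Set (Euc N)) : Prop := 0 < wPQ Λ

/-- A function on (bounded) subsets of `ℝ^N` is subadditive if
`F(Q₁ ∪ Q₂) ≤ F(Q₁) + F(Q₂)` for disjoint bounded `Q₁, Q₂`. -/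
def SubadditiveFn {N : ℕ} (F : Set (Euc N) → ℝ) : Prop :=
  ∀ Q₁ Q₂ : Set (Euc N), IsBounded Q₁ → IsBounded Q₂ → Disjoint Q₁ Q₂ →
    F (Q₁ ∪ Q₂) ≤ F Q₁ + F Q₂

/-- A function on (bounded) subsets is Λ-invariant if `F(Q) = F(t + Q)` whenever
`t + (Q ∩ Λ) = (t + Q) ∩ Λ`. -/
def InvariantFn {N : ℕ} (Λ : Set (Euc N)) (F : Set (Euc N) → ℝ) : Prop :=
  ∀ (t : Euc N) (Q : Set (Euc N)), IsBounded Q →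
    (fun p => t + p) '' (Q ∩ Λ) = ((fun p => t + p) '' Q) ∩ Λ →
    F Q = F ((fun p => t + p) '' Q)

/-- Λ satisfies the subadditive ergodic theorem (SET) if for every subadditive
Λ-invariant function `F` the limit `lim_{|C|→∞} F(C)/|C|` over cubes exists. -/
def SET {N : ℕ} (Λ : Set (Euc N)) : Prop :=
  ∀ F : Set (Euc N) → ℝ, SubadditiveFn F → InvariantFn Λ F →
    ∃ L : ℝ, Tendsto (fun cs : Euc N × ℝ => F (cube cs.1 cs.2) / cs.2 ^ N)
      (cubeFilter N) (nhds L)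

/-- Linear repetitivity (LR): `sup {r_cov(L_P)/r(P) : r(P) ≥ 1} < ∞`. -/
def LR {N : ℕ} (Λ : Set (Euc N)) : Prop :=
  (⨆ (x ∈ Λ) (R : ℝ) (_ : 1 ≤ R), rCov (locSet Λ x R) / ENNReal.ofReal R) < ⊤

/-- The repulsion property (RP): `inf {r_pack(L_P)/r(P) : P a ball pattern} > 0`. -/
def RP {N : ℕ} (Λ : Set (Euc N)) : Prop :=
  0 < ⨅ (x ∈ Λ) (R : ℝ) (_ : 0 < R), rPack (locSet Λ x R) / ENNReal.ofReal R

/-- The Voronoi cell of `x` with respect to `Γ`. -/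
def voronoiCell {N : ℕ} (Γ : Set (Euc N)) (x : Euc N) : Set (Euc N) :=
  {p | ∀ y ∈ Γ, dist p x ≤ dist p y}

/-- The inner radius of a set `V` around `x`. -/
def rIn {N : ℕ} (x : Euc N) (V : Set (Euc N)) : ℝ≥0∞ :=
  sSup {R : ℝ≥0∞ | EMetric.closedBall x R ⊆ V}

/-- The outer radius of a set `V` around `x`. -/
def rOut {N : ℕ} (x : Euc N) (V : Set (Euc N)) : ℝ≥0∞ :=
  sInf {R : ℝ≥0∞ | V ⊆ EMetric.closedBall x R}

/-- The distortion `λ(V) = r_out(V)/r_in(V)` of a set `V` around `x`. -/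
def distortion {N : ℕ} (x : Euc N) (V : Set (Euc N)) : ℝ≥0∞ := rOut x V / rIn x V

/-- The distortion of a discrete set: the supremum of the distortions of its
Voronoi cells. -/
def setDistortion {N : ℕ} (Γ : Set (Euc N)) : ℝ≥0∞ :=
  ⨆ x ∈ Γ, distortion x (voronoiCell Γ x)

/-- Uniformity of return words (U): the distortions of all locater sets of Λ are
uniformly bounded. -/
def URW {N : ℕ} (Λ : Set (Euc N)) : Prop :=
  (⨆ (x ∈ Λ) (R : ℝ) (_ : 0 < R), setDistortion (locSet Λ x R)) < ⊤

end

/-!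
The Voronoi cell of a point of `Γ` contains the ball of radius `r_pack(Γ)` and lies in the
ball of radius `r_cov(Γ)`, so `λ(Γ) ≤ r_cov(Γ) / r_pack(Γ)`. Linear repetitivity gives
`r_cov(L_P) ≤ u R` for `P = (x, R)`. For the packing radius, suppose two occurrences `y ≠ z`
of `P` satisfy `|z - y| ≤ R / 2u`. By LR, any `q ∈ Λ` has a copy `q'` of its
`R / 2u`-patch within distance `R` of `y`; the `R`-patch of `y` recurs at `z`, so
`q' + (z - y) ∈ Λ`, and the `R / 2u`-patch of `q'` recurs at `q`, so `q + (z - y) ∈ Λ`.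
Thus `z - y` is a period of `Λ`. Hence `r_pack(L_P) ≥ R / 4u` and `λ(L_P) ≤ 4u²` for large `R`;
for small `R`, `L_P` is squeezed between the locater set at radius `2u` and `Λ` itself.
-/

open Metric

section

variable {N : ℕ}

theorem mem_patch {Λ : Set (Euc N)} {x p : Euc N} {R : ℝ} :
    p ∈ patch Λ x R ↔ x + p ∈ Λ ∧ ‖p‖ ≤ R := by
  simp only [patch, Set.mem_inter_iff, Set.mem_image, mem_closedBall, dist_zero_right]
  constructor
  · rintro ⟨⟨w, hw, rfl⟩, hR⟩
    exact ⟨by simpa using hw, hR⟩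
  · rintro ⟨hΛ, hR⟩
    exact ⟨⟨x + p, hΛ, by abel⟩, hR⟩

theorem add_mem_iff_of_patch_eq {Λ : Set (Euc N)} {q q' p : Euc N} {r : ℝ}
    (h : patch Λ q r = patch Λ q' r) (hp : ‖p‖ ≤ r) : q + p ∈ Λ ↔ q' + p ∈ Λ := by
  have := congrArg (p ∈ ·) h
  simpa only [mem_patch, hp, and_true, eq_iff_iff] using this

theorem patch_eq_inter_closedBall {Λ : Set (Euc N)} {y : Euc N} {R R' : ℝ} (h : R ≤ R') :
    patch Λ y R = patch Λ y R' ∩ closedBall 0 R := by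
  rw [patch, patch, Set.inter_assoc,
    Set.inter_eq_self_of_subset_right (closedBall_subset_closedBall h)]

theorem locSet_subset_locSet {Λ : Set (Euc N)} {x : Euc N} {R R' : ℝ} (h : R ≤ R') :
    locSet Λ x R' ⊆ locSet Λ x R := by
  rintro y ⟨hyΛ, hy⟩
  exact ⟨hyΛ, by rw [patch_eq_inter_closedBall h, hy, ← patch_eq_inter_closedBall h]⟩

theorem locSet_subset {Λ : Set (Euc N)} {x : Euc N} {R : ℝ} : locSet Λ x R ⊆ Λ :=
  fun _ hy => hy.1

theorem infEdist_le_rCov (Γ : Set (Euc N)) (p : Euc N) : Metric.infEDist p Γ ≤ rCov Γ :=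
  le_iSup (fun p => Metric.infEDist p Γ) p

theorem rCov_anti {Γ Γ' : Set (Euc N)} (h : Γ ⊆ Γ') : rCov Γ' ≤ rCov Γ :=
  iSup_mono fun _ => Metric.infEDist_anti h

theorem rPack_le_edist_div_two {Γ : Set (Euc N)} {y z : Euc N} (hy : y ∈ Γ) (hz : z ∈ Γ)
    (hne : y ≠ z) : rPack Γ ≤ edist y z / 2 :=
  iInf₂_le_of_le y hy (iInf₂_le_of_le z hz (iInf_le _ hne))

theorem rPack_anti {Γ Γ' : Set (Euc N)} (h : Γ ⊆ Γ') : rPack Γ' ≤ rPack Γ :=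
  le_iInf₂ fun _ hy => le_iInf₂ fun _ hz => le_iInf fun hne =>
    rPack_le_edist_div_two (h hy) (h hz) hne

theorem edist_div_two_eq_ofReal (y z : Euc N) :
    edist y z / 2 = ENNReal.ofReal (dist y z / 2) := by
  rw [edist_dist, ENNReal.ofReal_div_of_pos two_pos, ENNReal.ofReal_ofNat]

theorem ofReal_div_two_le_rPack {Γ : Set (Euc N)} {d : ℝ}
    (h : ∀ y ∈ Γ, ∀ z ∈ Γ, y ≠ z → d ≤ dist y z) : ENNReal.ofReal (d / 2) ≤ rPack Γ :=
  le_iInf₂ fun y hy => le_iInf₂ fun z hz => le_iInf fun hne => by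
    rw [edist_div_two_eq_ofReal]
    exact ENNReal.ofReal_le_ofReal (by linarith [h y hy z hz hne])

theorem rOut_voronoiCell_le_rCov (Γ : Set (Euc N)) (x : Euc N) :
    rOut x (voronoiCell Γ x) ≤ rCov Γ := by
  refine sInf_le fun p hp => ?_
  calc edist p x ≤ Metric.infEDist p Γ := Metric.le_infEDist.mpr fun y hy => by
        rw [edist_dist, edist_dist]
        exact ENNReal.ofReal_le_ofReal (hp y hy)
    _ ≤ rCov Γ := infEdist_le_rCov Γ p

theorem rPack_le_rIn_voronoiCell {Γ : Set (Euc N)} {x : Euc N} (hx : x ∈ Γ) :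
    rPack Γ ≤ rIn x (voronoiCell Γ x) := by
  refine le_sSup fun p (hp : edist p x ≤ rPack Γ) y hy => ?_
  obtain rfl | hne := eq_or_ne x y
  · exact le_rfl
  have hpx : dist p x ≤ dist x y / 2 := by
    have := hp.trans (rPack_le_edist_div_two hx hy hne)
    rwa [edist_div_two_eq_ofReal, edist_dist,
      ENNReal.ofReal_le_ofReal_iff (by positivity)] at this
  linarith [dist_triangle x p y, dist_comm x p]

theorem setDistortion_le_rCov_div_rPack (Γ : Set (Euc N)) :
    setDistortion Γ ≤ rCov Γ / rPack Γ :=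
  iSup₂_le fun x hx =>
    ENNReal.div_le_div (rOut_voronoiCell_le_rCov Γ x) (rPack_le_rIn_voronoiCell hx)

theorem add_mem_of_patch_eq {Λ : Set (Euc N)} {y z : Euc N} {r R : ℝ}
    (hyz : patch Λ y R = patch Λ z R) (hr : ‖z - y‖ ≤ r)
    (hcov : ∀ q ∈ Λ, rCov (locSet Λ q r) < ENNReal.ofReal R) {q : Euc N} (hq : q ∈ Λ) :
    q + (z - y) ∈ Λ := by
  obtain ⟨q', ⟨hq'Λ, hq'q⟩, hyq'⟩ := Metric.infEDist_lt_iff.mp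
    ((infEdist_le_rCov (locSet Λ q r) y).trans_lt (hcov q hq))
  have hq'y : ‖q' - y‖ ≤ R := by
    rw [← dist_eq_norm, dist_comm]
    exact (edist_lt_ofReal.mp hyq').le
  have hq'_shift : q' + (z - y) ∈ Λ := by
    have := (add_mem_iff_of_patch_eq hyz hq'y).mp (by rwa [add_sub_cancel])
    rwa [add_sub_assoc', add_comm z, ← add_sub_assoc'] at this
  exact (add_mem_iff_of_patch_eq hq'q hr).mp hq'_shift

theorem eq_of_patch_eq_of_dist_le {Λ : Set (Euc N)} (hnp : NonPeriodic Λ) {y z : Euc N}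
    {r R : ℝ} (hyz : patch Λ y R = patch Λ z R) (hr : dist y z ≤ r)
    (hcov : ∀ q ∈ Λ, rCov (locSet Λ q r) < ENNReal.ofReal R) : y = z := by
  by_contra hne
  have hfwd {q} : q ∈ Λ → q + (z - y) ∈ Λ :=
    add_mem_of_patch_eq hyz (by rwa [← dist_eq_norm, dist_comm]) hcov
  have hbwd {q} : q ∈ Λ → q + (y - z) ∈ Λ :=
    add_mem_of_patch_eq hyz.symm (by rwa [← dist_eq_norm]) hcov
  refine hnp (z - y) (sub_ne_zero.mpr (Ne.symm hne)) (Set.ext fun w => ⟨?_, fun hw => ?_⟩)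
  · rintro ⟨q, hq, rfl⟩
    simpa only [sub_sub_eq_add_sub, add_sub_assoc] using hbwd hq
  · exact ⟨w + (z - y), hfwd hw, add_sub_cancel_right w (z - y)⟩

def IsLRConst (Λ : Set (Euc N)) (u : ℝ) : Prop :=
  ∀ q ∈ Λ, ∀ r : ℝ, 1 ≤ r → rCov (locSet Λ q r) ≤ ENNReal.ofReal (u * r)

theorem LR.exists_isLRConst {Λ : Set (Euc N)} (h : LR Λ) : ∃ u, 1 ≤ u ∧ IsLRConst Λ u := by
  set U := ⨆ (x ∈ Λ) (R : ℝ) (_ : 1 ≤ R), rCov (locSet Λ x R) / ENNReal.ofReal R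
  refine ⟨U.toReal + 1, by linarith [U.toReal_nonneg], fun q hq r hr => ?_⟩
  have hr0 : ENNReal.ofReal r ≠ 0 := by simp only [ne_eq, ENNReal.ofReal_eq_zero]; linarith
  have hqr : rCov (locSet Λ q r) / ENNReal.ofReal r ≤ U :=
    le_iSup₂_of_le q hq (le_iSup₂_of_le r hr le_rfl)
  have hU : U ≤ ENNReal.ofReal (U.toReal + 1) :=
    (ENNReal.le_ofReal_iff_toReal_le h.ne (by positivity)).mpr (by linarith)
  calc rCov (locSet Λ q r) ≤ U * ENNReal.ofReal r :=
        (ENNReal.div_le_iff_le_mul (Or.inl hr0) (Or.inl ENNReal.ofReal_ne_top)).mp hqr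
    _ ≤ ENNReal.ofReal (U.toReal + 1) * ENNReal.ofReal r := mul_le_mul_left hU _
    _ = ENNReal.ofReal ((U.toReal + 1) * r) := (ENNReal.ofReal_mul (by positivity)).symm

namespace IsLRConst

variable {Λ : Set (Euc N)} {u R : ℝ} {x : Euc N}

theorem lt_dist_of_mem_locSet (hu : IsLRConst Λ u) (hu1 : 1 ≤ u) (hnp : NonPeriodic Λ)
    (hR : 2 * u ≤ R) {y z : Euc N} (hy : y ∈ locSet Λ x R) (hz : z ∈ locSet Λ x R)
    (hne : y ≠ z) : R / (2 * u) < dist y z := by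
  by_contra! hle
  refine hne (eq_of_patch_eq_of_dist_le hnp (hy.2.trans hz.2.symm) hle fun q hq => ?_)
  have hR0 : 0 < R := by linarith
  calc rCov (locSet Λ q (R / (2 * u))) ≤ ENNReal.ofReal (u * (R / (2 * u))) :=
        hu q hq _ (by rw [le_div_iff₀ (by positivity)]; linarith)
    _ < ENNReal.ofReal R := by
        rw [ENNReal.ofReal_lt_ofReal_iff hR0]
        field_simp
        linarith

theorem ofReal_le_rPack_locSet (hu : IsLRConst Λ u) (hu1 : 1 ≤ u) (hnp : NonPeriodic Λ)
    (hR : 2 * u ≤ R) : ENNReal.ofReal (R / (4 * u)) ≤ rPack (locSet Λ x R) := by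
  have h := ofReal_div_two_le_rPack (Γ := locSet Λ x R) fun y hy z hz hne =>
    (hu.lt_dist_of_mem_locSet hu1 hnp hR hy hz hne).le
  rwa [div_div, show 2 * u * 2 = 4 * u by ring] at h

theorem setDistortion_locSet_le (hu : IsLRConst Λ u) (hu1 : 1 ≤ u) (hnp : NonPeriodic Λ)
    (hx : x ∈ Λ) (hR : 2 * u ≤ R) :
    setDistortion (locSet Λ x R) ≤ ENNReal.ofReal (4 * u ^ 2) := by
  have hR0 : 0 < R := by linarith
  calc setDistortion (locSet Λ x R) ≤ rCov (locSet Λ x R) / rPack (locSet Λ x R) :=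
        setDistortion_le_rCov_div_rPack _
    _ ≤ ENNReal.ofReal (u * R) / ENNReal.ofReal (R / (4 * u)) :=
        ENNReal.div_le_div (hu x hx R (by linarith)) (hu.ofReal_le_rPack_locSet hu1 hnp hR)
    _ = ENNReal.ofReal (4 * u ^ 2) := by
        rw [← ENNReal.ofReal_div_of_pos (by positivity)]
        congr 1
        field_simp

theorem setDistortion_locSet_le_of_le (hu : IsLRConst Λ u) (hu1 : 1 ≤ u) (hx : x ∈ Λ)
    (hR : R ≤ 2 * u) :
    setDistortion (locSet Λ x R) ≤ ENNReal.ofReal (2 * u ^ 2) / rPack Λ :=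
  calc setDistortion (locSet Λ x R) ≤ rCov (locSet Λ x R) / rPack (locSet Λ x R) :=
        setDistortion_le_rCov_div_rPack _
    _ ≤ ENNReal.ofReal (u * (2 * u)) / rPack Λ :=
        ENNReal.div_le_div ((rCov_anti (locSet_subset_locSet hR)).trans (hu x hx _ (by linarith)))
          (rPack_anti locSet_subset)
    _ = ENNReal.ofReal (2 * u ^ 2) / rPack Λ := by ring_nf

end IsLRConst

end

theorem lr_implies_u_general {N : ℕ} (Λ : Set (Euc N))
    (hΛ : IsDelone Λ) (hnp : NonPeriodic Λ) (hLR : LR Λ) :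
    URW Λ := by
  obtain ⟨u, hu1, hu⟩ := hLR.exists_isLRConst
  have hbound : max (ENNReal.ofReal (4 * u ^ 2)) (ENNReal.ofReal (2 * u ^ 2) / rPack Λ) < ⊤ :=
    max_lt ENNReal.ofReal_lt_top (ENNReal.div_lt_top ENNReal.ofReal_ne_top hΛ.1.ne')
  refine lt_of_le_of_lt (iSup₂_le fun x hx => iSup₂_le fun R _ => ?_) hbound
  rcases le_total (2 * u) R with hR | hR
  · exact le_max_of_le_left (hu.setDistortion_locSet_le hu1 hnp hx hR)
  · exact le_max_of_le_right (hu.setDistortion_locSet_le_of_le hu1 hx hR)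

/-- A non-periodic linearly repetitive Delone set satisfies
uniformity of return words (U). -/
theorem lr_implies_u {N : ℕ} (hN : 0 < N) (Λ : Set (Euc N))
    (hΛ : IsDelone Λ) (hnp : NonPeriodic Λ) (hLR : LR Λ) :
    URW Λ :=
  lr_implies_u_general Λ hΛ hnp hLR
end

section
/- For any Delone set Λ ⊆ ℝ^N and any ball pattern P on Λ, the lower reduced density satisfies ν'(P) ≤ |B₁| · (√N / 2)^N, where |B₁| is the Lebesgue measure of the closed unit ball in ℝ^N. -/
open Filter MeasureTheory Bornology
open scoped ENNReal

/-! Disjoint balls of radius `R` inside a cube of side `s` have total volume at most `s ^ N`,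
so every ratio in the `liminf` defining `ν'` is at most `1`. Conversely, the unit cube centred
at the origin lies in the ball of radius `√N / 2`, so `|B₁| · (√N / 2) ^ N ≥ 1`. -/

open Metric

theorem natCast_sSup_mul_le {S : Set ℕ} {c b : ℝ} (hb : 0 ≤ b)
    (h : ∀ n ∈ S, (n : ℝ) * c ≤ b) : (sSup S : ℕ) * c ≤ b := by
  by_cases hS : S.Nonempty ∧ BddAbove S
  · exact h _ (Nat.sSup_mem hS.1 hS.2)
  · have : sSup S = 0 := by
      rcases S.eq_empty_or_nonempty with rfl | hne
      · exact csSup_empty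
      · rw [csSup_of_not_bddAbove (hS ⟨hne, ·⟩), csSup_empty]; rfl
    simpa [this] using hb

theorem volume_cube {N : ℕ} (a : Euc N) {s : ℝ} (hs : 0 ≤ s) :
    volume (cube a s) = ENNReal.ofReal (s ^ N) := by
  have h : cube a s = (MeasurableEquiv.toLp 2 (Fin N → ℝ)).symm ⁻¹'
      Set.univ.pi fun i => Set.Icc (a i) (a i + s) := by
    ext p
    simp only [cube, Set.mem_ofPred_eq, Set.mem_preimage, Set.mem_univ_pi, Set.mem_Icc]
    rfl
  rw [h, (EuclideanSpace.volume_preserving_symm_measurableEquiv_toLp (Fin N)).measure_preimage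
    (MeasurableSet.univ_pi fun i => measurableSet_Icc).nullMeasurableSet, volume_pi_pi]
  simp [Real.volume_Icc, ENNReal.ofReal_pow hs]

theorem card_mul_volume_closedBall_le {N : ℕ} {R : ℝ} {Q : Set (Euc N)} (A : Finset (Euc N))
    (hA : ∀ y ∈ A, closedBall y R ⊆ Q) (hsep : ∀ u ∈ A, ∀ v ∈ A, u ≠ v → 2 * R < dist u v) :
    A.card * volume (closedBall (0 : Euc N) R) ≤ volume Q := by
  have hdisj : (A : Set (Euc N)).PairwiseDisjoint (closedBall · R) := by
    intro u hu v hv huv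
    refine closedBall_disjoint_closedBall ?_
    linarith [hsep u hu v hv huv]
  calc A.card * volume (closedBall (0 : Euc N) R)
      = ∑ y ∈ A, volume (closedBall y R) := by
        simp [volume.addHaar_closedBall_center]
    _ = volume (⋃ y ∈ A, closedBall y R) :=
        (measure_biUnion_finset hdisj fun _ _ => measurableSet_closedBall).symm
    _ ≤ volume Q := measure_mono (Set.iUnion₂_subset hA)

theorem countP'_cube_mul_ballVol_le {N : ℕ} (Λ : Set (Euc N)) (x : Euc N) (R : ℝ)
    (a : Euc N) {s : ℝ} (hs : 0 ≤ s) :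
    (countP' Λ x R (cube a s) : ℝ) * ballVol N R ≤ s ^ N := by
  refine natCast_sSup_mul_le (by positivity) ?_
  rintro n ⟨A, hA, hsep, rfl⟩
  have hvol := card_mul_volume_closedBall_le A (fun y hy => (hA hy).2) hsep
  rw [volume_cube a hs] at hvol
  simpa [ballVol, ENNReal.toReal_ofReal (pow_nonneg hs N)] using
    ENNReal.toReal_mono ENNReal.ofReal_ne_top hvol

theorem nu'_le_one {N : ℕ} (Λ : Set (Euc N)) (x : Euc N) (R : ℝ) : nu' Λ x R ≤ 1 := by
  have : (cubeFilter N).NeBot := Filter.prod_neBot.2 ⟨⟨top_ne_bot⟩, atTop_neBot⟩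
  have hratio : ∀ᶠ cs : Euc N × ℝ in cubeFilter N,
      (countP' Λ x R (cube cs.1 cs.2) : ℝ) * ballVol N R / cs.2 ^ N ∈ Set.Icc (0 : ℝ) 1 := by
    filter_upwards [(eventually_gt_atTop (0 : ℝ)).prod_inr ⊤] with cs hs
    have hpow : 0 < cs.2 ^ N := pow_pos hs N
    refine ⟨by unfold ballVol; positivity, ?_⟩
    rw [div_le_one hpow]
    exact countP'_cube_mul_ballVol_le Λ x R cs.1 hs.le
  exact liminf_le_of_frequently_le (hratio.mono fun _ h => h.2).frequently
    ⟨0, eventually_map.2 (hratio.mono fun _ h => h.1)⟩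

theorem cube_subset_closedBall_sqrt {N : ℕ} :
    cube (WithLp.toLp 2 fun _ => -(1 / 2) : Euc N) 1 ⊆ closedBall 0 (Real.sqrt N / 2) := by
  intro p hp
  have hcoord : ∀ i, ‖p i‖ ^ 2 ≤ (1 / 2) ^ 2 := by
    intro i
    obtain ⟨hlo, hhi⟩ := hp i
    rw [Real.norm_eq_abs, sq_abs]
    nlinarith
  rw [mem_closedBall, dist_zero_right, EuclideanSpace.norm_eq]
  calc Real.sqrt (∑ i, ‖p i‖ ^ 2) ≤ Real.sqrt (N * (1 / 2) ^ 2) := by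
        gcongr
        simpa using Finset.sum_le_sum fun i (_ : i ∈ Finset.univ) => hcoord i
    _ = Real.sqrt N / 2 := by
        rw [Real.sqrt_mul (Nat.cast_nonneg N), Real.sqrt_sq (by norm_num)]
        ring

theorem one_le_ballVol_one_mul_sqrt_div_two_pow (N : ℕ) :
    1 ≤ ballVol N 1 * (Real.sqrt N / 2) ^ N := by
  have hr : 0 ≤ Real.sqrt N / 2 := by positivity
  have hvol : 1 ≤ volume (closedBall (0 : Euc N) (Real.sqrt N / 2)) :=
    calc 1 = volume (cube (WithLp.toLp 2 fun _ => -(1 / 2) : Euc N) 1) := by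
          simp [volume_cube _ zero_le_one]
      _ ≤ _ := measure_mono cube_subset_closedBall_sqrt
  rw [Measure.addHaar_closedBall' volume 0 hr, finrank_euclideanSpace_fin] at hvol
  have := ENNReal.toReal_mono
    (ENNReal.mul_ne_top ENNReal.ofReal_ne_top measure_closedBall_lt_top.ne) hvol
  rw [ENNReal.toReal_mul, ENNReal.toReal_ofReal (pow_nonneg hr N), ENNReal.toReal_one] at this
  rw [ballVol, mul_comm]
  exact this

theorem nu'_upper_bound_general {N : ℕ} (Λ : Set (Euc N)) (x : Euc N) (R : ℝ) :
    nu' Λ x R ≤ ballVol N 1 * (Real.sqrt N / 2) ^ N :=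
  (nu'_le_one Λ x R).trans (one_le_ballVol_one_mul_sqrt_div_two_pow N)

/-- For any Delone set and any ball pattern `P`,
`ν'(P) ≤ |B₁| · (√N/2)^N`. -/
theorem nu'_upper_bound {N : ℕ} (hN : 0 < N) (Λ : Set (Euc N)) (hΛ : IsDelone Λ)
    (x : Euc N) (hx : x ∈ Λ) (R : ℝ) (hR : 0 < R) :
    nu' Λ x R ≤ ballVol N 1 * (Real.sqrt N / 2) ^ N :=
  nu'_upper_bound_general Λ x R
end
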